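/- For real s > 1, ζ(s) = 1 + Σ_{q=1}^∞ Σ_{m=2}^∞ ζ(s+q, m), where the double series converges. -/

import Mathlib

/-!
Summing over the exponent first, `Σ_{q≥1} n^{-(s+q)} = n^{-s}/(n-1)`, and every `n ≥ 2` is
`k + m` with `k ≥ 0`, `m ≥ 2` in exactly `n - 1` ways. All terms are nonnegative, so the triple
series may be rearranged freely, and it collapses to `Σ_{n≥2} n^{-s} = ζ(s) - 1`.
-/

/-- Riemann zeta as a series (valid for s > 1). -/
noncomputable def zetaR (s : ℝ) : ℝ := ∑' n : ℕ, ((n : ℝ) + 1) ^ (-s)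

/-- Hurwitz zeta function (series definition, valid for s > 1, q > 0). -/
noncomputable def hurwitzZetaSeries (s q : ℝ) : ℝ := ∑' k : ℕ, ((k : ℝ) + q) ^ (-s)

open Finset

theorem hasSum_sigma_of_nonneg {α : Type*} {β : α → Type*} {f : (Σ x, β x) → ℝ} (hf : 0 ≤ f)
    {g : α → ℝ} {a : ℝ} (hfg : ∀ x, HasSum (fun y => f ⟨x, y⟩) (g x)) (hg : HasSum g a) :
    HasSum f a := by
  have hf_summable : Summable f := (summable_sigma_of_nonneg hf).2
    ⟨fun x => (hfg x).summable, by simpa only [(hfg _).tsum_eq] using hg.summable⟩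
  exact (hf_summable.hasSum.sigma hfg).unique hg ▸ hf_summable.hasSum

theorem hasSum_prod_of_nonneg {α β : Type*} {f : α × β → ℝ} (hf : 0 ≤ f)
    {g : α → ℝ} {a : ℝ} (hfg : ∀ x, HasSum (fun y => f (x, y)) (g x)) (hg : HasSum g a) :
    HasSum f a :=
  (Equiv.sigmaEquivProd α β).hasSum_iff.1 <|
    hasSum_sigma_of_nonneg (fun _ => hf _) hfg hg

theorem hasSum_comp_add_of_nonneg {A : Type*} [AddMonoid A] [HasAntidiagonal A] {f : A → ℝ}
    (hf : 0 ≤ f) {a : ℝ} (h : HasSum (fun n => #(antidiagonal n) * f n) a) :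
    HasSum (fun p : A × A => f (p.1 + p.2)) a := by
  rw [← HasAntidiagonal.sigmaAntidiagonalEquivProd.hasSum_iff]
  refine hasSum_sigma_of_nonneg (fun _ => hf _) (fun n => ?_) h
  have hfiber : ∀ p : antidiagonal n, f ((p : A × A).1 + (p : A × A).2) = f n :=
    fun p => congrArg f (mem_antidiagonal.1 p.2)
  simpa [hfiber] using hasSum_fintype fun _ : antidiagonal n => f n

theorem hasSum_rpow_neg_add_succ {x : ℝ} (hx : 1 < x) (s : ℝ) :
    HasSum (fun q : ℕ => x ^ (-(s + (q + 1)))) (x ^ (-s) / (x - 1)) := by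
  have hx0 : 0 < x := by linarith
  have hterm : ∀ q : ℕ, x ^ (-(s + (q + 1))) = x ^ (-s) * x⁻¹ * x⁻¹ ^ q := fun q => by
    rw [show -(s + (q + 1)) = -s + -1 + -q by ring, Real.rpow_add hx0, Real.rpow_add hx0,
      Real.rpow_neg_one, Real.rpow_neg hx0.le (q : ℝ), Real.rpow_natCast, inv_pow]
  have hsum : x ^ (-s) / (x - 1) = x ^ (-s) * x⁻¹ * (1 - x⁻¹)⁻¹ := by
    field_simp
  simp only [hterm, hsum]
  exact (hasSum_geometric_of_lt_one (by positivity) (inv_lt_one_of_one_lt₀ hx)).mul_left _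

theorem hasSum_zetaR_sub_one {s : ℝ} (hs : 1 < s) :
    HasSum (fun n : ℕ => ((n : ℝ) + 2) ^ (-s)) (zetaR s - 1) := by
  have hzeta : Summable fun n : ℕ => ((n : ℝ) + 1) ^ (-s) := by
    simpa using (summable_nat_add_iff 1).2 (Real.summable_nat_rpow.2 (by linarith : -s < -1))
  have := (hasSum_nat_add_iff' 1).2 hzeta.hasSum
  simpa [zetaR, add_assoc, one_add_one_eq_two] using this

theorem hasSum_zetaR_sub_one_triple {s : ℝ} (hs : 1 < s) :
    HasSum (fun x : (ℕ × ℕ) × ℕ => (((x.1.1 + x.1.2 : ℕ) : ℝ) + 2) ^ (-(s + (x.2 + 1))))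
      (zetaR s - 1) := by
  have hdiag : HasSum (fun p : ℕ × ℕ =>
      (((p.1 + p.2 : ℕ) : ℝ) + 2) ^ (-s) / (((p.1 + p.2 : ℕ) : ℝ) + 1)) (zetaR s - 1) := by
    refine hasSum_comp_add_of_nonneg (f := fun n : ℕ => ((n : ℝ) + 2) ^ (-s) / ((n : ℝ) + 1))
      (fun n => by positivity) ?_
    convert hasSum_zetaR_sub_one hs using 2 with n
    rw [Nat.card_antidiagonal, Nat.cast_add_one]
    exact mul_div_cancel₀ _ (by positivity)
  refine hasSum_prod_of_nonneg (fun x => by positivity) (fun p => ?_) hdiag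
  have hbase : (1 : ℝ) < ((p.1 + p.2 : ℕ) : ℝ) + 2 := by
    linarith [(p.1 + p.2).cast_nonneg (α := ℝ)]
  convert hasSum_rpow_neg_add_succ hbase s using 2
  ring

/-- ζ(s) = 1 + Σ_{q≥1} Σ_{m≥2} ζ(s+q,m), the double series converging. -/
theorem zeta_eq_one_add_double_sum (s : ℝ) (hs : 1 < s) :
    Summable (fun p : ℕ × ℕ => hurwitzZetaSeries (s + ((p.1 : ℝ) + 1)) ((p.2 : ℝ) + 2)) ∧
    zetaR s = 1 + ∑' q : ℕ, ∑' m : ℕ,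
        hurwitzZetaSeries (s + ((q : ℝ) + 1)) ((m : ℝ) + 2) := by
  let e : (ℕ × ℕ) × ℕ ≃ (ℕ × ℕ) × ℕ :=
    (Equiv.prodAssoc ℕ ℕ ℕ).trans (Equiv.prodComm ℕ (ℕ × ℕ))
  have hterms : HasSum (fun x : (ℕ × ℕ) × ℕ =>
      ((x.2 : ℝ) + ((x.1.2 : ℝ) + 2)) ^ (-(s + ((x.1.1 : ℝ) + 1)))) (zetaR s - 1) := by
    convert e.hasSum_iff.2 (hasSum_zetaR_sub_one_triple hs) using 2 with x
    simp only [e, Equiv.coe_trans, Equiv.coe_prodComm, Function.comp_apply,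
      Equiv.prodAssoc_apply, Prod.swap_prod_mk, Nat.cast_add]
    congr 1
    ring
  have hhurwitz : HasSum (fun p : ℕ × ℕ =>
      hurwitzZetaSeries (s + ((p.1 : ℝ) + 1)) ((p.2 : ℝ) + 2)) (zetaR s - 1) :=
    hterms.prod_fiberwise fun p => (hterms.summable.prod_factor p).hasSum
  refine ⟨hhurwitz.summable, ?_⟩
  rw [← hhurwitz.summable.tsum_prod, hhurwitz.tsum_eq]
  ring
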